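/- Duality relation for the series F_{N,M}: let q, x_1,…,x_M, y_1,…,y_N, a_1,…,a_M, b_1,…,b_N be complex numbers with |q| < 1, |x_i| < 1 and |y_j| < 1 for all i, j. Assume (b_j y_j;q)_n ≠ 0 and (a_i x_i;q)_n ≠ 0 for all i, j and all n ∈ ℕ, that (x_i;q)_∞ ≠ 0 and (y_j;q)_∞ ≠ 0 for all i, j, and that the doubly-indexed family (m,n) ∈ ℕ^M × ℕ^N ↦ ∏_{i=1}^M ((a_i;q)_{m_i}/(q;q)_{m_i}) x_i^{m_i} · ∏_{j=1}^N ((b_j;q)_{n_j}/(q;q)_{n_j}) y_j^{n_j} · q^{|m||n|} is absolutely summable. Then F_{N,M}({y_j},{a_i};{b_j y_j};{x_i}) = [∏_{j=1}^N (y_j;q)_∞ · ∏_{i=1}^M (a_i x_i;q)_∞] / [∏_{j=1}^N (b_j y_j;q)_∞ · ∏_{i=1}^M (x_i;q)_∞] · F_{M,N}({x_i},{b_j};{a_i x_i};{y_j}). -/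

import Mathlib

open scoped BigOperators

noncomputable def qPoch (q a : ℂ) (n : ℕ) : ℂ :=
  ∏ k ∈ Finset.range n, (1 - q ^ k * a)

noncomputable def qPochInf (q a : ℂ) : ℂ :=
  ∏' k : ℕ, (1 - q ^ k * a)

/-- The generalized `q`-hypergeometric series `F_{N,M}` with upper parameters `a`,
`b`-type parameters `b`, lower parameters `c` and variables `y`. -/
noncomputable def qHyperF (q : ℂ) {N M : ℕ} (a : Fin N → ℂ) (b : Fin M → ℂ)
    (c : Fin N → ℂ) (y : Fin M → ℂ) : ℂ :=
  ∑' m : Fin M → ℕ,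
    (∏ j, qPoch q (a j) (∑ i, m i) / qPoch q (c j) (∑ i, m i)) *
      (∏ i, qPoch q (b i) (m i) / qPoch q q (m i)) * ∏ i, y i ^ m i

/-! The q-binomial theorem `∑ (b;q)_n/(q;q)_n z^n = (bz;q)_∞/(z;q)_∞` follows from the functional
equation `(1 - z) S(z) = (1 - bz) S(qz)` of its left side, iterated `K` times and passed to the
limit `S(q^K z) → 1`. Writing `(y;q)_s/(by;q)_s = (y;q)_∞/(by;q)_∞ · (q^s by;q)_∞/(q^s y;q)_∞` and
expanding the last factor by the q-binomial theorem turns the left-hand side into a constant times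
the double series of `qDualTerm` over `(m, n)`, summed first in `n`. That double series is symmetric
under `(x, a, m) ↔ (y, b, n)`, so the right-hand side is the same sum with the other constant. -/

open Filter Topology

section Pochhammer

variable {q : ℂ}

lemma qPoch_succ (a : ℂ) (n : ℕ) : qPoch q a (n + 1) = qPoch q a n * (1 - q ^ n * a) :=
  Finset.prod_range_succ _ _

lemma norm_pow_mul_lt_one (hq : ‖q‖ ≤ 1) {z : ℂ} (hz : ‖z‖ < 1) (k : ℕ) : ‖q ^ k * z‖ < 1 := by
  rw [norm_mul, norm_pow]
  exact lt_of_le_of_lt (mul_le_of_le_one_left (norm_nonneg z) (pow_le_one₀ (norm_nonneg q) hq)) hz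

lemma one_sub_pow_mul_ne_zero (hq : ‖q‖ ≤ 1) {z : ℂ} (hz : ‖z‖ < 1) (k : ℕ) :
    1 - q ^ k * z ≠ 0 := by
  intro h
  simpa [← sub_eq_zero.mp h] using norm_pow_mul_lt_one hq hz k

lemma one_sub_pow_mul_self_ne_zero (hq : ‖q‖ < 1) (k : ℕ) : 1 - q ^ k * q ≠ 0 :=
  one_sub_pow_mul_ne_zero hq.le hq k

lemma qPoch_self_ne_zero (hq : ‖q‖ < 1) (n : ℕ) : qPoch q q n ≠ 0 :=
  Finset.prod_ne_zero_iff.2 fun k _ => one_sub_pow_mul_self_ne_zero hq k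

lemma summable_norm_pow_mul (hq : ‖q‖ < 1) (a : ℂ) : Summable fun k : ℕ => ‖q ^ k * a‖ := by
  simpa only [norm_mul, norm_pow] using
    (summable_geometric_of_lt_one (norm_nonneg q) hq).mul_right ‖a‖

lemma multipliable_one_sub_pow_mul (hq : ‖q‖ < 1) (a : ℂ) :
    Multipliable fun k : ℕ => 1 - q ^ k * a := by
  simpa only [sub_eq_add_neg] using
    multipliable_one_add_of_summable (by simpa only [norm_neg] using summable_norm_pow_mul hq a)

lemma tendsto_qPoch (hq : ‖q‖ < 1) (a : ℂ) :
    Tendsto (qPoch q a) atTop (𝓝 (qPochInf q a)) :=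
  (multipliable_one_sub_pow_mul hq a).tendsto_prod_tprod_nat

lemma qPochInf_ne_zero (hq : ‖q‖ < 1) {a : ℂ} (h : ∀ k, 1 - q ^ k * a ≠ 0) :
    qPochInf q a ≠ 0 := by
  simp only [sub_eq_add_neg] at h
  simpa only [qPochInf, sub_eq_add_neg] using tprod_one_add_ne_zero_of_summable h
    (by simpa only [norm_neg] using summable_norm_pow_mul hq a)

lemma qPochInf_ne_zero_of_qPoch_ne_zero (hq : ‖q‖ < 1) {a : ℂ} (h : ∀ n, qPoch q a n ≠ 0) :
    qPochInf q a ≠ 0 :=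
  qPochInf_ne_zero hq fun k =>
    Finset.prod_ne_zero_iff.1 (h (k + 1)) k (Finset.self_mem_range_succ k)

lemma qPochInf_eq_qPoch_mul (hq : ‖q‖ < 1) (a : ℂ) (s : ℕ) :
    qPochInf q a = qPoch q a s * qPochInf q (q ^ s * a) := by
  have hshift : ∀ k, 1 - q ^ (k + s) * a = 1 - q ^ k * (q ^ s * a) := fun k => by ring
  rw [qPochInf, qPoch, qPochInf, ← Multipliable.prod_mul_tprod_nat_mul' (k := s)]
  · simp only [hshift]
  · simpa only [hshift] using multipliable_one_sub_pow_mul hq (q ^ s * a)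

end Pochhammer

section QBinomial

variable {q : ℂ}

noncomputable def qBinomialSeries (q b z : ℂ) : ℂ :=
  ∑' n : ℕ, qPoch q b n / qPoch q q n * z ^ n

lemma qPoch_div_qPoch_self_succ_mul (hq : ‖q‖ < 1) (b : ℂ) (n : ℕ) :
    qPoch q b (n + 1) / qPoch q q (n + 1) * (1 - q ^ (n + 1)) =
      qPoch q b n / qPoch q q n * (1 - q ^ n * b) := by
  have h₁ := qPoch_self_ne_zero hq n
  have h₂ := one_sub_pow_mul_self_ne_zero hq n
  rw [qPoch_succ, qPoch_succ, pow_succ]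
  field_simp

lemma exists_norm_qPoch_div_qPoch_self_le (hq : ‖q‖ < 1) (b : ℂ) :
    ∃ D, ∀ n, ‖qPoch q b n / qPoch q q n‖ ≤ D := by
  have hlim := (tendsto_qPoch hq b).div (tendsto_qPoch hq q)
    (qPochInf_ne_zero hq (one_sub_pow_mul_self_ne_zero hq))
  obtain ⟨D, hD⟩ := hlim.norm.bddAbove_range
  exact ⟨D, fun n => hD ⟨n, rfl⟩⟩

lemma summable_norm_qBinomial_term (hq : ‖q‖ < 1) (b : ℂ) {z : ℂ} (hz : ‖z‖ < 1) :
    Summable fun n : ℕ => ‖qPoch q b n / qPoch q q n * z ^ n‖ := by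
  obtain ⟨D, hD⟩ := exists_norm_qPoch_div_qPoch_self_le hq b
  refine .of_nonneg_of_le (fun n => norm_nonneg _) (fun n => ?_)
    ((summable_geometric_of_lt_one (norm_nonneg z) hz).mul_left D)
  rw [norm_mul, norm_pow]
  exact mul_le_mul_of_nonneg_right (hD n) (by positivity)

lemma one_sub_mul_qBinomialSeries (hq : ‖q‖ < 1) (b : ℂ) {z : ℂ} (hz : ‖z‖ < 1) :
    (1 - z) * qBinomialSeries q b z = (1 - b * z) * qBinomialSeries q b (q * z) := by
  set c : ℕ → ℂ := fun n => qPoch q b n / qPoch q q n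
  have hs₁ : Summable fun n => c n * z ^ n := (summable_norm_qBinomial_term hq b hz).of_norm
  have hs₂ : Summable fun n => c n * (q * z) ^ n :=
    (summable_norm_qBinomial_term hq b (by simpa using norm_pow_mul_lt_one hq.le hz 1)).of_norm
  have hdiff : Summable fun n => c n * (1 - q ^ n) * z ^ n :=
    (hs₁.sub hs₂).congr fun n => by simp only [mul_pow]; ring
  have key : qBinomialSeries q b z - qBinomialSeries q b (q * z)
      = z * qBinomialSeries q b z - b * z * qBinomialSeries q b (q * z) :=
    calc qBinomialSeries q b z - qBinomialSeries q b (q * z)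
        = ∑' n, c n * (1 - q ^ n) * z ^ n := by
          rw [qBinomialSeries, qBinomialSeries, ← hs₁.tsum_sub hs₂]
          exact tsum_congr fun n => by simp only [mul_pow]; ring
      _ = ∑' n, c (n + 1) * (1 - q ^ (n + 1)) * z ^ (n + 1) := by
          rw [hdiff.tsum_eq_zero_add]; simp
      _ = ∑' n, (z * (c n * z ^ n) - b * z * (c n * (q * z) ^ n)) := by
          refine tsum_congr fun n => ?_
          rw [qPoch_div_qPoch_self_succ_mul hq b n, mul_pow, pow_succ]; ring
      _ = z * qBinomialSeries q b z - b * z * qBinomialSeries q b (q * z) := by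
          rw [(hs₁.mul_left z).tsum_sub (hs₂.mul_left (b * z)), tsum_mul_left, tsum_mul_left]
          rfl
  linear_combination key

lemma qBinomialSeries_mul_qPoch (hq : ‖q‖ < 1) (b : ℂ) {w : ℂ} (hw : ‖w‖ < 1) (K : ℕ) :
    qBinomialSeries q b w * qPoch q w K = qBinomialSeries q b (q ^ K * w) * qPoch q (b * w) K := by
  induction K with
  | zero => simp [qPoch]
  | succ K ih =>
    have hfun := one_sub_mul_qBinomialSeries hq b (norm_pow_mul_lt_one hq.le hw K)
    rw [show q * (q ^ K * w) = q ^ (K + 1) * w by ring] at hfun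
    rw [qPoch_succ, qPoch_succ, ← mul_assoc, ih]
    linear_combination qPoch q (b * w) K * hfun

lemma tendsto_qBinomialSeries_pow_mul (hq : ‖q‖ < 1) (b : ℂ) {w : ℂ} (hw : ‖w‖ < 1) :
    Tendsto (fun K => qBinomialSeries q b (q ^ K * w)) atTop (𝓝 1) := by
  obtain ⟨D, hD⟩ := exists_norm_qPoch_div_qPoch_self_le hq b
  have hlim : Tendsto (fun K => qBinomialSeries q b (q ^ K * w)) atTop
      (𝓝 (∑' n : ℕ, qPoch q b n / qPoch q q n * 0 ^ n)) := by
    refine tendsto_tsum_of_dominated_convergence (bound := fun n => D * ‖w‖ ^ n)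
      ((summable_geometric_of_lt_one (norm_nonneg w) hw).mul_left D) (fun n => ?_)
      (.of_forall fun K n => ?_)
    · have hqK : Tendsto (fun K => q ^ K * w) atTop (𝓝 0) := by
        simpa using (tendsto_pow_atTop_nhds_zero_of_norm_lt_one hq).mul_const w
      exact (hqK.pow n).const_mul _
    · rw [norm_mul, norm_pow]
      refine mul_le_mul (hD n) (pow_le_pow_left₀ (norm_nonneg _) ?_ n) (by positivity)
        ((norm_nonneg _).trans (hD n))
      simpa [norm_mul] using mul_le_of_le_one_left (norm_nonneg w)
        (pow_le_one₀ (norm_nonneg q) hq.le)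
  rw [tsum_eq_single 0 fun n hn => by simp [hn]] at hlim
  simpa [qPoch] using hlim

theorem qBinomialSeries_eq (hq : ‖q‖ < 1) (b : ℂ) {w : ℂ} (hw : ‖w‖ < 1) :
    qBinomialSeries q b w = qPochInf q (b * w) / qPochInf q w := by
  refine eq_div_of_mul_eq (qPochInf_ne_zero hq (one_sub_pow_mul_ne_zero hq.le hw)) ?_
  refine tendsto_nhds_unique ((tendsto_qPoch hq w).const_mul _) ?_
  simpa only [qBinomialSeries_mul_qPoch hq b hw, one_mul] using
    (tendsto_qBinomialSeries_pow_mul hq b hw).mul (tendsto_qPoch hq (b * w))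

lemma qPoch_div_qPoch_eq_mul_qBinomialSeries (hq : ‖q‖ < 1) (b : ℂ) {y : ℂ} (hy : ‖y‖ < 1)
    (hby : qPochInf q (b * y) ≠ 0) (s : ℕ) :
    qPoch q y s / qPoch q (b * y) s =
      qPochInf q y / qPochInf q (b * y) * qBinomialSeries q b (q ^ s * y) := by
  have hqsy := norm_pow_mul_lt_one hq.le hy s
  have hA : qPochInf q (q ^ s * y) ≠ 0 := qPochInf_ne_zero hq (one_sub_pow_mul_ne_zero hq.le hqsy)
  rw [qPochInf_eq_qPoch_mul hq (b * y) s] at hby ⊢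
  rw [qBinomialSeries_eq hq b hqsy, qPochInf_eq_qPoch_mul hq y s,
    show b * (q ^ s * y) = q ^ s * (b * y) by ring]
  have hB := right_ne_zero_of_mul hby
  have hC := left_ne_zero_of_mul hby
  generalize qPochInf q (q ^ s * y) = A at hA ⊢
  generalize qPochInf q (q ^ s * (b * y)) = B at hB ⊢
  field_simp

end QBinomial

section FinProd

variable {R ι : Type*} [NormedCommRing R] [NormOneClass R] [NormMulClass R]

lemma summable_norm_fin_prod {K : ℕ} {f : Fin K → ι → R}
    (hf : ∀ j, Summable fun n => ‖f j n‖) :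
    Summable fun m : Fin K → ι => ‖∏ j, f j (m j)‖ := by
  induction K with
  | zero => exact .of_finite
  | succ K ih =>
    refine (Fin.consEquiv fun _ => ι).summable_iff.1 ?_
    refine ((hf 0).mul_of_nonneg (ih fun j => hf j.succ) (fun _ => norm_nonneg _)
      (fun _ => norm_nonneg _)).congr fun p => ?_
    simp [Fin.consEquiv, Fin.prod_univ_succ]

lemma tsum_fin_prod [CompleteSpace R] {K : ℕ} {f : Fin K → ι → R} (hf : ∀ j, Summable fun n => ‖f j n‖) :
    ∑' m : Fin K → ι, ∏ j, f j (m j) = ∏ j, ∑' n, f j n := by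
  induction K with
  | zero => simp
  | succ K ih =>
    rw [Fin.prod_univ_succ, ← ih fun j => hf j.succ,
      tsum_mul_tsum_of_summable_norm (hf 0) (summable_norm_fin_prod fun j => hf j.succ),
      ← (Fin.consEquiv fun _ => ι).tsum_eq]
    simp [Fin.consEquiv, Fin.prod_univ_succ]

end FinProd

section Duality

variable {q : ℂ} {M N : ℕ}

noncomputable def qDualTerm (q : ℂ) (x a : Fin M → ℂ) (y b : Fin N → ℂ)
    (p : (Fin M → ℕ) × (Fin N → ℕ)) : ℂ :=
  (∏ i, qPoch q (a i) (p.1 i) / qPoch q q (p.1 i) * x i ^ p.1 i) *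
    (∏ j, qPoch q (b j) (p.2 j) / qPoch q q (p.2 j) * y j ^ p.2 j) *
    q ^ ((∑ i, p.1 i) * (∑ j, p.2 j))

lemma qDualTerm_swap (x a : Fin M → ℂ) (y b : Fin N → ℂ) (p : (Fin M → ℕ) × (Fin N → ℕ)) :
    qDualTerm q y b x a p.swap = qDualTerm q x a y b p := by
  simp only [qDualTerm, Prod.fst_swap, Prod.snd_swap, Nat.mul_comm (∑ j, p.2 j)]
  ring

lemma Summable.qDualTerm_swap {x a : Fin M → ℂ} {y b : Fin N → ℂ}
    (h : Summable (qDualTerm q x a y b)) : Summable (qDualTerm q y b x a) :=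
  (Equiv.prodComm _ _).summable_iff.1 (h.congr fun p => (_root_.qDualTerm_swap x a y b p).symm)

lemma tsum_qDualTerm_swap (x a : Fin M → ℂ) (y b : Fin N → ℂ) :
    ∑' p, qDualTerm q y b x a p = ∑' p, qDualTerm q x a y b p := by
  rw [← (Equiv.prodComm _ _).tsum_eq]
  exact tsum_congr (qDualTerm_swap x a y b)

lemma qHyperF_eq_mul_tsum_qDualTerm (hq : ‖q‖ < 1) {x a : Fin M → ℂ} {y b : Fin N → ℂ}
    (hy : ∀ j, ‖y j‖ < 1) (hby : ∀ j, qPochInf q (b j * y j) ≠ 0)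
    (hT : Summable (qDualTerm q x a y b)) :
    qHyperF q y a (fun j => b j * y j) x =
      (∏ j, qPochInf q (y j) / qPochInf q (b j * y j)) * ∑' p, qDualTerm q x a y b p := by
  rw [hT.tsum_prod, ← tsum_mul_left, qHyperF]
  refine tsum_congr fun m => ?_
  set s := ∑ i, m i
  have hinner : ∏ j, qBinomialSeries q (b j) (q ^ s * y j) =
      ∑' n : Fin N → ℕ, ∏ j, qPoch q (b j) (n j) / qPoch q q (n j) * (q ^ s * y j) ^ n j :=
    (tsum_fin_prod fun j =>
      summable_norm_qBinomial_term hq (b j) (norm_pow_mul_lt_one hq.le (hy j) s)).symm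
  have hterm : ∀ n : Fin N → ℕ,
      (∏ i, qPoch q (a i) (m i) / qPoch q q (m i)) * (∏ i, x i ^ m i) *
        ∏ j, qPoch q (b j) (n j) / qPoch q q (n j) * (q ^ s * y j) ^ n j =
      qDualTerm q x a y b (m, n) := fun n => by
    simp only [qDualTerm, mul_pow, Finset.prod_mul_distrib, Finset.prod_pow_eq_pow_sum, pow_mul]
    ring
  calc _ = (∏ j, qPochInf q (y j) / qPochInf q (b j * y j)) *
        ((∏ i, qPoch q (a i) (m i) / qPoch q q (m i)) * (∏ i, x i ^ m i) *
          ∏ j, qBinomialSeries q (b j) (q ^ s * y j)) := by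
        simp_rw [qPoch_div_qPoch_eq_mul_qBinomialSeries hq _ (hy _) (hby _),
          Finset.prod_mul_distrib]
        ring
    _ = _ := by simp_rw [hinner, ← tsum_mul_left, hterm]

end Duality

theorem statement2_general (M N : ℕ) (q : ℂ) (x a : Fin M → ℂ) (y b : Fin N → ℂ)
    (hq : ‖q‖ < 1)
    (hx : ∀ i, ‖x i‖ < 1) (hy : ∀ j, ‖y j‖ < 1)
    (hby : ∀ j n, qPoch q (b j * y j) n ≠ 0)
    (hax : ∀ i n, qPoch q (a i * x i) n ≠ 0)
    (hsum : Summable (fun p : (Fin M → ℕ) × (Fin N → ℕ) =>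
      ‖(∏ i, qPoch q (a i) (p.1 i) / qPoch q q (p.1 i) * x i ^ p.1 i) *
        (∏ j, qPoch q (b j) (p.2 j) / qPoch q q (p.2 j) * y j ^ p.2 j) *
        q ^ ((∑ i, p.1 i) * (∑ j, p.2 j))‖)) :
    qHyperF q y a (fun j => b j * y j) x
      = ((∏ j, qPochInf q (y j)) * ∏ i, qPochInf q (a i * x i)) /
          ((∏ j, qPochInf q (b j * y j)) * ∏ i, qPochInf q (x i)) *
        qHyperF q x b (fun i => a i * x i) y := by
  have hT : Summable (qDualTerm q x a y b) := hsum.of_norm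
  have hby' j := qPochInf_ne_zero_of_qPoch_ne_zero hq (hby j)
  have hax' i := qPochInf_ne_zero_of_qPoch_ne_zero hq (hax i)
  have hx' i := qPochInf_ne_zero hq (one_sub_pow_mul_ne_zero hq.le (hx i))
  rw [qHyperF_eq_mul_tsum_qDualTerm hq hy hby' hT,
    qHyperF_eq_mul_tsum_qDualTerm hq hx hax' hT.qDualTerm_swap, tsum_qDualTerm_swap,
    Finset.prod_div_distrib, Finset.prod_div_distrib]
  have : ∏ j, qPochInf q (b j * y j) ≠ 0 := Finset.prod_ne_zero_iff.2 fun j _ => hby' j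
  have : ∏ i, qPochInf q (a i * x i) ≠ 0 := Finset.prod_ne_zero_iff.2 fun i _ => hax' i
  have : ∏ i, qPochInf q (x i) ≠ 0 := Finset.prod_ne_zero_iff.2 fun i _ => hx' i
  field_simp

theorem statement2 (M N : ℕ) (q : ℂ) (x a : Fin M → ℂ) (y b : Fin N → ℂ)
    (hq : ‖q‖ < 1)
    (hx : ∀ i, ‖x i‖ < 1) (hy : ∀ j, ‖y j‖ < 1)
    (hby : ∀ j n, qPoch q (b j * y j) n ≠ 0)
    (hax : ∀ i n, qPoch q (a i * x i) n ≠ 0)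
    (hxinf : ∀ i, qPochInf q (x i) ≠ 0)
    (hyinf : ∀ j, qPochInf q (y j) ≠ 0)
    (hsum : Summable (fun p : (Fin M → ℕ) × (Fin N → ℕ) =>
      ‖(∏ i, qPoch q (a i) (p.1 i) / qPoch q q (p.1 i) * x i ^ p.1 i) *
        (∏ j, qPoch q (b j) (p.2 j) / qPoch q q (p.2 j) * y j ^ p.2 j) *
        q ^ ((∑ i, p.1 i) * (∑ j, p.2 j))‖)) :
    qHyperF q y a (fun j => b j * y j) x
      = ((∏ j, qPochInf q (y j)) * ∏ i, qPochInf q (a i * x i)) /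
          ((∏ j, qPochInf q (b j * y j)) * ∏ i, qPochInf q (x i)) *
        qHyperF q x b (fun i => a i * x i) y :=
  statement2_general M N q x a y b hq hx hy hby hax hsum
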